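/- In the Milnor-Witt K-theory $K^{MW}_*(F)$ of a field $F$, define $n_\epsilon = \sum_{i=1}^{n} \langle (-1)^{i-1} \rangle$ for $n \geq 1$, where $\langle a \rangle = 1 + \eta[a]$. Then for every unit $a \in F^\times$ and every integer $n \geq 1$, $[a^n] = n_\epsilon [a]$ in $K^{MW}_1(F)$. -/

import Mathlib

/-! Milnor–Witt K-theory of a field `F`, presented (following Morel) as the ring generated by
symbols `[a]` for `a ∈ Fˣ` together with an element `η`, subject to the relations
(1) `[a][1-a] = 0` for `a ≠ 0, 1` (Steinberg relation);
(2) `[ab] = [a] + [b] + η[a][b]`;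
(3) `η[a] = [a]η`;
(4) `η(η[-1] + 2) = 0`.
We realize it as a quotient of the free (noncommutative) `ℤ`-algebra on the set
`Option Fˣ`, where `some a` corresponds to the symbol `[a]` and `none` to `η`. -/

namespace MWK

variable (F : Type*) [Field F]

/-- Morel's defining relations for Milnor–Witt K-theory. -/
inductive Rel : FreeAlgebra ℤ (Option Fˣ) → FreeAlgebra ℤ (Option Fˣ) → Prop
  | steinberg (a : Fˣ) (h : (a : F) ≠ 1) :
      Rel (FreeAlgebra.ι ℤ (Option.some a) *
        FreeAlgebra.ι ℤ (Option.some (Units.mk0 ((1 : F) - a) (sub_ne_zero.mpr (Ne.symm h))))) 0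
  | mul (a b : Fˣ) :
      Rel (FreeAlgebra.ι ℤ (Option.some (a * b)))
        (FreeAlgebra.ι ℤ (Option.some a) + FreeAlgebra.ι ℤ (Option.some b) +
          FreeAlgebra.ι ℤ (Option.none : Option Fˣ) * FreeAlgebra.ι ℤ (Option.some a) *
            FreeAlgebra.ι ℤ (Option.some b))
  | etaComm (a : Fˣ) :
      Rel (FreeAlgebra.ι ℤ (Option.none : Option Fˣ) * FreeAlgebra.ι ℤ (Option.some a))
        (FreeAlgebra.ι ℤ (Option.some a) * FreeAlgebra.ι ℤ (Option.none : Option Fˣ))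
  | hyperbolic :
      Rel (FreeAlgebra.ι ℤ (Option.none : Option Fˣ) *
        (FreeAlgebra.ι ℤ (Option.none : Option Fˣ) * FreeAlgebra.ι ℤ (Option.some (-1 : Fˣ)) + 2))
        0

/-- Milnor–Witt K-theory of the field `F`, presented by Morel's generators and relations. -/
abbrev MW := RingQuot (Rel F)

/-- The Milnor–Witt symbol `[a]`, for a unit `a` of `F`. -/
def symbol (a : Fˣ) : MW F :=
  RingQuot.mkRingHom (Rel F) (FreeAlgebra.ι ℤ (Option.some a))

/-- The Hopf element `η` of Milnor–Witt K-theory. -/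
def eta : MW F :=
  RingQuot.mkRingHom (Rel F) (FreeAlgebra.ι ℤ (Option.none : Option Fˣ))

/-!
With `⟨a⟩ = 1 + η[a]`, relation (2) reads `[ab] = [a] + ⟨a⟩[b]`; `⟨-⟩` is multiplicative and
commutes with every symbol. Relation (4) says `η⟨-1⟩ = -η`, which gives `η[1] = 0` and so `[1] = 0`.
The Steinberg relation for `a` and `a⁻¹`, together with `-a = (1 - a)/(1 - a⁻¹)`, gives
`[a][-a] = 0`, hence `[a][a] = [-1][a]` and `⟨a⟩[a] = ⟨-1⟩[a]`. Therefore
`[aⁿ⁺¹] = [aⁿ] + ⟨a⟩ⁿ[a] = [aⁿ] + ⟨(-1)ⁿ⟩[a]`, and the formula follows by induction on `n`.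
-/

variable {F}

lemma symbol_mul (a b : Fˣ) :
    symbol F (a * b) = symbol F a + symbol F b + eta F * symbol F a * symbol F b := by
  simpa only [symbol, eta, map_add, map_mul] using RingQuot.mkRingHom_rel (Rel.mul a b)

lemma commute_eta_symbol (a : Fˣ) : Commute (eta F) (symbol F a) := by
  have h := RingQuot.mkRingHom_rel (Rel.etaComm a)
  rw [map_mul, map_mul] at h
  exact h

lemma eta_mul_eta_mul_symbol_neg_one_add_two : eta F * (eta F * symbol F (-1) + 2) = 0 := by
  simpa only [symbol, eta, map_mul, map_add, map_ofNat, map_zero] using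
    RingQuot.mkRingHom_rel (Rel.hyperbolic (F := F))

lemma symbol_mul_symbol_of_add_eq_one {a b : Fˣ} (hab : (a : F) + b = 1) :
    symbol F a * symbol F b = 0 := by
  have ha : (a : F) ≠ 1 := fun h => b.ne_zero (by linear_combination hab - h)
  have hb : b = Units.mk0 (1 - (a : F)) (sub_ne_zero.mpr ha.symm) :=
    Units.ext (by simp only [Units.val_mk0]; linear_combination hab)
  simpa only [symbol, map_mul, map_zero, ← hb] using RingQuot.mkRingHom_rel (Rel.steinberg a ha)

/-- The element written `⟨a⟩` in the literature. -/
def form (a : Fˣ) : MW F := 1 + eta F * symbol F a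

lemma symbol_mul_eq_add_form_mul (a b : Fˣ) :
    symbol F (a * b) = symbol F a + form a * symbol F b := by
  rw [symbol_mul, form]
  noncomm_ring

lemma form_mul (a b : Fˣ) : form (a * b) = form a * form b := by
  rw [form, form, form, symbol_mul]
  linear_combination (norm := noncomm_ring) eta F * (commute_eta_symbol a).eq * symbol F b

lemma commute_form (a b : Fˣ) : Commute (form a) (form b) := by
  rw [Commute, SemiconjBy, ← form_mul, ← form_mul, mul_comm]

lemma eta_mul_form_neg_one_add_eta : eta F * form (-1) + eta F = 0 := by
  rw [form]
  linear_combination (norm := noncomm_ring) eta_mul_eta_mul_symbol_neg_one_add_two (F := F)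

lemma eta_mul_symbol_one : eta F * symbol F 1 = 0 := by
  have h := symbol_mul_eq_add_form_mul (F := F) (-1) (-1)
  rw [neg_one_mul, neg_neg] at h
  linear_combination (norm := noncomm_ring)
    eta F * h + eta_mul_form_neg_one_add_eta (F := F) * symbol F (-1)

lemma symbol_one : symbol F 1 = 0 := by
  have h := symbol_mul (F := F) 1 1
  rw [one_mul, eta_mul_symbol_one, zero_mul, add_zero, left_eq_add] at h
  exact h

lemma eta_mul_symbol_mul_symbol_comm (a b : Fˣ) :
    eta F * symbol F a * symbol F b = eta F * symbol F b * symbol F a := by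
  have h := symbol_mul (F := F) b a
  rw [mul_comm, symbol_mul] at h
  linear_combination (norm := noncomm_ring) h

lemma commute_form_symbol (a b : Fˣ) : Commute (form a) (symbol F b) := by
  rw [Commute, SemiconjBy, form, mul_add, add_mul, mul_one, one_mul, ← mul_assoc,
    ← (commute_eta_symbol b).eq, eta_mul_symbol_mul_symbol_comm]

lemma symbol_inv_add_form_inv_mul_symbol (a : Fˣ) :
    symbol F a⁻¹ + form a⁻¹ * symbol F a = 0 := by
  rw [← symbol_mul_eq_add_form_mul, inv_mul_cancel, symbol_one]

section Annihilator

variable {x y z : Fˣ}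

lemma symbol_mul_symbol_mul (hy : symbol F x * symbol F y = 0)
    (hz : symbol F x * symbol F z = 0) : symbol F x * symbol F (y * z) = 0 := by
  rw [symbol_mul_eq_add_form_mul, mul_add, hy, ← mul_assoc, ← (commute_form_symbol y x).eq,
    mul_assoc, hz, mul_zero, add_zero]

lemma symbol_mul_symbol_inv (h : symbol F x * symbol F y = 0) :
    symbol F x * symbol F y⁻¹ = 0 := by
  linear_combination (norm := noncomm_ring) symbol F x * symbol_inv_add_form_inv_mul_symbol y +
    (commute_form_symbol y⁻¹ x).eq * symbol F y - form y⁻¹ * h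

lemma symbol_inv_mul_symbol (h : symbol F x * symbol F y = 0) :
    symbol F x⁻¹ * symbol F y = 0 := by
  linear_combination (norm := noncomm_ring)
    symbol_inv_add_form_inv_mul_symbol x * symbol F y - form x⁻¹ * h

end Annihilator

lemma symbol_mul_symbol_neg (a : Fˣ) : symbol F a * symbol F (-a) = 0 := by
  rcases eq_or_ne a 1 with rfl | ha
  · rw [symbol_one, zero_mul]
  have ha1 : (a : F) ≠ 1 := fun h => ha (Units.ext h)
  have hinv : (a⁻¹ : F) ≠ 1 := by rwa [ne_eq, inv_eq_one]
  set u := Units.mk0 (1 - (a : F)) (sub_ne_zero.mpr ha1.symm)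
  set v := Units.mk0 (1 - (a⁻¹ : F)) (sub_ne_zero.mpr hinv.symm)
  have hneg : -a = u * v⁻¹ := Units.ext <| by
    have h0 : (a : F) ≠ 0 := a.ne_zero
    have h1 : (a : F) - 1 ≠ 0 := sub_ne_zero.mpr ha1
    simp only [Units.val_neg, Units.val_mul, Units.val_inv_eq_inv_val, Units.val_mk0, u, v]
    field_simp
    ring
  have hu : symbol F a * symbol F u = 0 := symbol_mul_symbol_of_add_eq_one (by simp [u])
  have hv : symbol F a⁻¹ * symbol F v = 0 :=
    symbol_mul_symbol_of_add_eq_one (by simp [v, Units.val_inv_eq_inv_val])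
  rw [hneg]
  exact symbol_mul_symbol_mul hu (symbol_mul_symbol_inv (inv_inv a ▸ symbol_inv_mul_symbol hv))

lemma symbol_mul_symbol_self (a : Fˣ) :
    symbol F a * symbol F a = symbol F (-1) * symbol F a := by
  have h := symbol_mul_eq_add_form_mul (F := F) (-1) (-a)
  rw [neg_one_mul, neg_neg] at h
  have hneg := symbol_mul_symbol_neg (F := F) (-a)
  rw [neg_neg] at hneg
  linear_combination (norm := noncomm_ring) h * symbol F a + form (-1) * hneg

lemma form_mul_symbol_self (a : Fˣ) : form a * symbol F a = form (-1) * symbol F a := by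
  rw [form, form, add_mul, add_mul, mul_assoc, mul_assoc, symbol_mul_symbol_self]

lemma form_pow_mul_symbol (a : Fˣ) (n : ℕ) :
    form (a ^ n) * symbol F a = form ((-1) ^ n) * symbol F a := by
  induction n with
  | zero => simp only [pow_zero]
  | succ n ih =>
    rw [pow_succ, pow_succ, form_mul, form_mul, mul_assoc, form_mul_symbol_self,
      ← mul_assoc, (commute_form _ _).eq, mul_assoc, ih, ← mul_assoc, (commute_form _ _).eq,
      mul_assoc]

lemma symbol_pow (a : Fˣ) (n : ℕ) :
    symbol F (a ^ n) = (∑ i ∈ Finset.range n, form ((-1) ^ i)) * symbol F a := by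
  induction n with
  | zero => rw [pow_zero, symbol_one, Finset.sum_range_zero, zero_mul]
  | succ n ih =>
    rw [pow_succ, symbol_mul_eq_add_form_mul, ih, form_pow_mul_symbol, Finset.sum_range_succ,
      add_mul]

end MWK

theorem stmt_7_general (F : Type*) [Field F] (a : Fˣ) (n : ℕ) :
    MWK.symbol F (a ^ n) =
      (∑ i ∈ Finset.range n, (1 + MWK.eta F * MWK.symbol F ((-1 : Fˣ) ^ i))) *
        MWK.symbol F a :=
  MWK.symbol_pow a n

/-- In Milnor–Witt K-theory, with `⟨a⟩ = 1 + η[a]` and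
`n_ε = ∑_{i=1}^n ⟨(-1)^(i-1)⟩`, one has `[aⁿ] = n_ε [a]` for every unit `a ∈ Fˣ` and every
integer `n ≥ 1`. -/
theorem stmt_7 (F : Type*) [Field F] (a : Fˣ) (n : ℕ) (hn : 1 ≤ n) :
    MWK.symbol F (a ^ n) =
      (∑ i ∈ Finset.range n, (1 + MWK.eta F * MWK.symbol F ((-1 : Fˣ) ^ i))) *
        MWK.symbol F a :=
  stmt_7_general F a n
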